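/- Let u, v, z solve the N = 3 Riemann type system and suppose a smooth function h satisfies h_t = k u_x h + u h_x for a nonzero real constant k, with h > 0 everywhere and h 2π-periodic in x. Then H := ∫₀^{2π} h^{1/k} dx is conserved in time. -/

import Mathlib

open Real

noncomputable def pdx (f : ℝ → ℝ → ℝ) (x t : ℝ) : ℝ := deriv (fun y => f y t) x

noncomputable def pdt (f : ℝ → ℝ → ℝ) (x t : ℝ) : ℝ := deriv (fun s => f x s) t

lemma hasDerivAt_pdt (f : ℝ → ℝ → ℝ) (hf : ContDiff ℝ (⊤ : ℕ∞) (Function.uncurry f)) (x t : ℝ) :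
    HasDerivAt (fun s => f x s) (fderiv ℝ (Function.uncurry f) (x, t) (0, 1)) t := by
  have h1 : HasDerivAt (fun s : ℝ => ((x, s) : ℝ × ℝ)) ((0 : ℝ), (1 : ℝ)) t :=
    (hasDerivAt_const t x).prodMk (hasDerivAt_id t)
  have := ((hf.differentiable (by simp) (x, t)).hasFDerivAt).comp_hasDerivAt t h1
  exact this

lemma pdt_eq (f : ℝ → ℝ → ℝ) (hf : ContDiff ℝ (⊤ : ℕ∞) (Function.uncurry f)) (x t : ℝ) :
    pdt f x t = fderiv ℝ (Function.uncurry f) (x, t) (0, 1) :=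
  (hasDerivAt_pdt f hf x t).deriv

lemma hasDerivAt_pdt' (f : ℝ → ℝ → ℝ) (hf : ContDiff ℝ (⊤ : ℕ∞) (Function.uncurry f)) (x t : ℝ) :
    HasDerivAt (fun s => f x s) (pdt f x t) t := by
  rw [pdt_eq f hf]; exact hasDerivAt_pdt f hf x t

lemma hasDerivAt_pdx (f : ℝ → ℝ → ℝ) (hf : ContDiff ℝ (⊤ : ℕ∞) (Function.uncurry f)) (x t : ℝ) :
    HasDerivAt (fun y => f y t) (fderiv ℝ (Function.uncurry f) (x, t) (1, 0)) x := by
  have h1 : HasDerivAt (fun y : ℝ => ((y, t) : ℝ × ℝ)) ((1 : ℝ), (0 : ℝ)) x :=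
    (hasDerivAt_id x).prodMk (hasDerivAt_const x t)
  have := ((hf.differentiable (by simp) (x, t)).hasFDerivAt).comp_hasDerivAt x h1
  exact this

lemma pdx_eq (f : ℝ → ℝ → ℝ) (hf : ContDiff ℝ (⊤ : ℕ∞) (Function.uncurry f)) (x t : ℝ) :
    pdx f x t = fderiv ℝ (Function.uncurry f) (x, t) (1, 0) :=
  (hasDerivAt_pdx f hf x t).deriv

lemma hasDerivAt_pdx' (f : ℝ → ℝ → ℝ) (hf : ContDiff ℝ (⊤ : ℕ∞) (Function.uncurry f)) (x t : ℝ) :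
    HasDerivAt (fun y => f y t) (pdx f x t) x := by
  rw [pdx_eq f hf]; exact hasDerivAt_pdx f hf x t

lemma pdt_cont (f : ℝ → ℝ → ℝ) (hf : ContDiff ℝ (⊤ : ℕ∞) (Function.uncurry f)) :
    Continuous (fun p : ℝ × ℝ => pdt f p.1 p.2) := by
  have : Continuous (fun p : ℝ × ℝ => fderiv ℝ (Function.uncurry f) p (0, 1)) :=
    (hf.fderiv_right (m := (⊤ : ℕ∞)) (by simp)).continuous.clm_apply continuous_const
  exact this.congr fun p => (pdt_eq f hf p.1 p.2).symm

lemma pdx_cont (f : ℝ → ℝ → ℝ) (hf : ContDiff ℝ (⊤ : ℕ∞) (Function.uncurry f)) :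
    Continuous (fun p : ℝ × ℝ => pdx f p.1 p.2) := by
  have : Continuous (fun p : ℝ × ℝ => fderiv ℝ (Function.uncurry f) p (1, 0)) :=
    (hf.fderiv_right (m := (⊤ : ℕ∞)) (by simp)).continuous.clm_apply continuous_const
  exact this.congr fun p => (pdx_eq f hf p.1 p.2).symm

/-- The material derivative `D_t = ∂/∂t + u ∂/∂x` associated to the velocity `u`. -/
noncomputable def matDt (u f : ℝ → ℝ → ℝ) : ℝ → ℝ → ℝ :=
  fun x t => pdt f x t + u x t * pdx f x t
theorem statement17
    (u v z : ℝ → ℝ → ℝ)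
    (hu : ContDiff ℝ (⊤ : ℕ∞) (Function.uncurry u))
    (hv : ContDiff ℝ (⊤ : ℕ∞) (Function.uncurry v))
    (hz : ContDiff ℝ (⊤ : ℕ∞) (Function.uncurry z))
    (heq1 : ∀ x t, pdt u x t = v x t - u x t * pdx u x t)
    (heq2 : ∀ x t, pdt v x t = z x t - u x t * pdx v x t)
    (heq3 : ∀ x t, pdt z x t = - u x t * pdx z x t)
    (hup : ∀ t, Function.Periodic (fun x => u x t) (2 * Real.pi))
    (hvp : ∀ t, Function.Periodic (fun x => v x t) (2 * Real.pi))
    (hzp : ∀ t, Function.Periodic (fun x => z x t) (2 * Real.pi))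
    (h : ℝ → ℝ → ℝ) (k : ℝ) (hk : k ≠ 0)
    (hh : ContDiff ℝ (⊤ : ℕ∞) (Function.uncurry h))
    (hhpos : ∀ x t, 0 < h x t)
    (hhp : ∀ t, Function.Periodic (fun x => h x t) (2 * Real.pi))
    (heqh : ∀ x t, pdt h x t = k * pdx u x t * h x t + u x t * pdx h x t) :
    ∀ t, deriv (fun s => ∫ x in (0:ℝ)..(2 * Real.pi), (h x s) ^ (1 / k)) t = 0 := by
  intro t₀
  set c : ℝ := 1 / k with hc
  have hne : ∀ x t, h x t ≠ 0 := fun x t => (hhpos x t).ne'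
  have hhc : Continuous fun p : ℝ × ℝ => h p.1 p.2 := hh.continuous
  have hFc : Continuous fun p : ℝ × ℝ => h p.1 p.2 ^ c :=
    hhc.rpow_const fun p => Or.inl (hne _ _)
  have hF'c : Continuous fun p : ℝ × ℝ => pdt h p.1 p.2 * c * h p.1 p.2 ^ (c - 1) :=
    ((pdt_cont h hh).mul continuous_const).mul
      (hhc.rpow_const fun p => Or.inl (hne _ _))
  -- compact bound
  have hK : IsCompact ((Set.uIcc (0:ℝ) (2 * Real.pi)) ×ˢ Metric.closedBall t₀ 1) :=
    isCompact_uIcc.prod (isCompact_closedBall _ _)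
  have hKne : ((Set.uIcc (0:ℝ) (2 * Real.pi)) ×ˢ Metric.closedBall t₀ 1).Nonempty :=
    (Set.nonempty_uIcc).prod (Metric.nonempty_closedBall.2 zero_le_one)
  obtain ⟨p₀, _, hp₀⟩ := hK.exists_isMaxOn hKne
    (hF'c.norm.continuousOn)
  set C : ℝ := ‖pdt h p₀.1 p₀.2 * c * h p₀.1 p₀.2 ^ (c - 1)‖ with hC
  -- derivative of integrand in s
  have hdiff : ∀ x s, HasDerivAt (fun s => h x s ^ c)
      (pdt h x s * c * h x s ^ (c - 1)) s := fun x s =>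
    (hasDerivAt_pdt' h hh x s).rpow_const (Or.inl (hne _ _))
  have key := intervalIntegral.hasDerivAt_integral_of_dominated_loc_of_deriv_le
    (F := fun s x => h x s ^ c) (F' := fun s x => pdt h x s * c * h x s ^ (c - 1))
    (x₀ := t₀) (a := 0) (b := 2 * Real.pi) (bound := fun _ => C) (μ := MeasureTheory.volume)
    (Metric.ball_mem_nhds t₀ one_pos)
    (Filter.Eventually.of_forall fun s =>
      ((hFc.comp (continuous_id.prodMk continuous_const)).aestronglyMeasurable))
    ((hFc.comp (continuous_id.prodMk continuous_const)).intervalIntegrable _ _)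
    ((hF'c.comp (continuous_id.prodMk continuous_const)).aestronglyMeasurable)
    (Filter.Eventually.of_forall fun x hx s hs => by
      have hmem : ((x, s) : ℝ × ℝ) ∈ (Set.uIcc (0:ℝ) (2 * Real.pi)) ×ˢ Metric.closedBall t₀ 1 :=
        ⟨Set.uIoc_subset_uIcc hx, Metric.ball_subset_closedBall hs⟩
      exact hp₀ hmem)
    (intervalIntegrable_const)
    (Filter.Eventually.of_forall fun x _ s _ => hdiff x s)
  rw [key.2.deriv]
  -- now show the integral of the x-derivative vanishes
  have hgd : ∀ x, HasDerivAt (fun y => u y t₀ * h y t₀ ^ c)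
      (pdt h x t₀ * c * h x t₀ ^ (c - 1)) x := by
    intro x
    have h1 : HasDerivAt (fun y => u y t₀ * h y t₀ ^ c)
        (pdx u x t₀ * h x t₀ ^ c +
          u x t₀ * (pdx h x t₀ * c * h x t₀ ^ (c - 1))) x :=
      (hasDerivAt_pdx' u hu x t₀).mul
        ((hasDerivAt_pdx' h hh x t₀).rpow_const (Or.inl (hne _ _)))
    convert h1 using 1
    have hpow : h x t₀ ^ (c - 1) * h x t₀ = h x t₀ ^ c := by
      rw [← Real.rpow_add_one (hne x t₀) (c - 1)]; ring_nf
    have hkc : k * c = 1 := by rw [hc]; field_simp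
    rw [heqh, ← hpow]
    linear_combination (pdx u x t₀ * h x t₀ * h x t₀ ^ (c - 1)) * hkc
  have hint : IntervalIntegrable (fun x => pdt h x t₀ * c * h x t₀ ^ (c - 1))
      MeasureTheory.volume 0 (2 * Real.pi) :=
    (hF'c.comp (continuous_id.prodMk continuous_const)).intervalIntegrable _ _
  rw [intervalIntegral.integral_eq_sub_of_hasDerivAt (fun x _ => hgd x) hint]
  have h1 := (hup t₀) 0
  have h2 := (hhp t₀) 0
  simp only [zero_add] at h1 h2
  rw [h1, h2]
  ring
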